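/- arXiv:1310.0110 — 2 statements merged into one kernel-verified Lean document; each statement's English description precedes it below -/
import Mathlib

section
/- For n a natural number and π a permutation of Fin n, the lexicographic rank of π equals the factoradic value of its Lehmer code: card{σ : permutation of Fin n | the sequence (σ(0),...,σ(n-1)) is lexicographically smaller than (π(0),...,π(n-1))} = Σ_{i : Fin n} f(i) · (n - 1 - i)!, where f(i) = card{j : Fin n | i < j ∧ π(j) < π(i)} is the Lehmer code of π. -/
/-!
A permutation `σ` is lexicographically smaller than `π` exactly when, at the first position `i`
where the two differ, `σ i < π i`; this first position is unique, so the lexicographic rank is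
the sum over `i` of the number of such `σ`. Writing `σ = π * ρ`, these `σ` correspond to the
permutations `ρ` of `{j | i ≤ j}` with `π (ρ i) < π i`: there are `f(i)` choices for `ρ i`
(it cannot be `i` itself) and `(n - 1 - i)!` for the rest of `ρ`.
-/

open Finset Function

namespace Equiv.Perm

theorem card_subtype_apply {β : Type*} [Fintype β] [DecidableEq β]
    (p : β → Prop) [DecidablePred p] (b : β) :
    Fintype.card {g : Perm β // p (g b)}
      = Fintype.card {x // p x} * (Fintype.card β - 1).factorial := by
  let e : Perm β ≃ β × Perm {y // y ≠ b} :=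
    (optionSubtypeNe b).permCongr.symm.trans <|
      decomposeOption.trans <| (optionSubtypeNe b).prodCongr (Equiv.refl _)
  have he (g : Perm β) : (e g).1 = g b := (optionSubtypeNe b).apply_symm_apply (g b)
  rw [Fintype.card_congr ((e.subtypeEquiv fun g => by rw [he]).trans
      (prodSubtypeFstEquivSubtypeProd (p := p))),
    Fintype.card_prod, Fintype.card_perm, Fintype.card_subtype_compl, Fintype.card_subtype_eq]

variable {α : Type*} [Fintype α] [LinearOrder α]

def lexLtAt (π : Perm α) (i : α) : Finset (Perm α) :=
  {σ | (∀ j < i, σ j = π j) ∧ σ i < π i}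

theorem pairwise_disjoint_lexLtAt (π : Perm α) : Pairwise (_root_.Disjoint on lexLtAt π) := by
  intro i i' hne
  refine Finset.disjoint_left.2 fun σ hσ hσ' => ?_
  simp only [lexLtAt, mem_filter, mem_univ, true_and] at hσ hσ'
  rcases hne.lt_or_gt with h | h
  · exact (hσ'.1 i h ▸ hσ.2).false
  · exact (hσ.1 i' h ▸ hσ'.2).false

theorem card_lexLtAt_eq_card_subtype_perm (π : Perm α) (i : α) :
    #(lexLtAt π i) = Fintype.card {g : Perm {j // i ≤ j} // π (g ⟨i, le_rfl⟩) < π i} := by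
  rw [lexLtAt, ← Fintype.card_subtype]
  refine Fintype.card_congr <| (Equiv.subtypeEquiv (Equiv.mulLeft π⁻¹)
    (q := fun ρ => (∀ j, ¬ i ≤ j → ρ j = j) ∧ π (ρ i) < π i) fun σ => ?_).trans <|
    (subtypeSubtypeEquivSubtypeInter _ _).symm.trans <|
    (Equiv.subtypeEquiv (Perm.subtypeEquivSubtypePerm (i ≤ ·))
      (p := fun g => π (g ⟨i, le_rfl⟩) < π i)
      fun g => by rw [subtypeEquivSubtypePerm_apply_of_mem g le_rfl]).symm
  simp only [not_le, coe_mulLeft, mul_apply, inv_def, apply_symm_apply, symm_apply_eq]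

theorem card_lexLtAt [LocallyFiniteOrderTop α] (π : Perm α) (i : α) :
    #(lexLtAt π i) = #{j | i < j ∧ π j < π i} * (#(Ioi i)).factorial := by
  rw [card_lexLtAt_eq_card_subtype_perm, card_subtype_apply (fun x : {j // i ≤ j} => π x < π i),
    Fintype.card_congr (subtypeSubtypeEquivSubtypeInter (i ≤ ·) (fun j => π j < π i)),
    Fintype.card_subtype, Fintype.card_subtype, filter_le_eq_Ici, ← card_Ioi_eq_card_Ici_sub_one]
  congr 3
  ext j
  exact ⟨fun h => ⟨h.1.lt_of_ne fun hij => (hij ▸ h.2).false, h.2⟩,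
    fun h => ⟨h.1.le, h.2⟩⟩

theorem card_lexLt_eq_sum [LocallyFiniteOrderTop α] (π : Perm α) :
    #{σ : Perm α | ∃ i, (∀ j < i, σ j = π j) ∧ σ i < π i}
      = ∑ i, #{j | i < j ∧ π j < π i} * (#(Ioi i)).factorial := by
  have hbiUnion : ({σ : Perm α | ∃ i, (∀ j < i, σ j = π j) ∧ σ i < π i} : Finset _)
      = univ.biUnion (lexLtAt π) := by
    ext σ
    simp [lexLtAt]
  rw [hbiUnion, card_biUnion fun i _ i' _ hne => pairwise_disjoint_lexLtAt π hne]
  simp only [card_lexLtAt]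

end Equiv.Perm

/-- Step 5 of Section 3: the lexicographic rank of a permutation equals the
factoradic value of its Lehmer code. -/
theorem lex_rank_eq_factoradic (n : ℕ) (π : Equiv.Perm (Fin n)) :
    (Finset.univ.filter (fun σ : Equiv.Perm (Fin n) =>
        ∃ i : Fin n, (∀ j : Fin n, j < i → σ j = π j) ∧ σ i < π i)).card
      = ∑ i : Fin n,
          (Finset.univ.filter (fun j : Fin n => i < j ∧ π j < π i)).card
            * Nat.factorial (n - 1 - (i : ℕ)) := by
  -- The statement's `Decidable` instances come from `Fin`'s own order, not from `LinearOrder`;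
  -- `convert` identifies them.
  convert Equiv.Perm.card_lexLt_eq_sum π using 4 with i
  rw [Fin.card_Ioi]
end

section
/- Fix a natural number n, two distinct indices i, j : Fin n with i ≠ j, and values a ≤ n - 1 - i and b ≤ n - 1 - j. Then card{π : permutation of Fin n | f_π(i) = a ∧ f_π(j) = b} · (n - i) · (n - j) = n!, where f_π is the Lehmer code of π. That is, under the uniform distribution on permutations of Fin n, distinct factoradic digits are independent. -/
/-! The Lehmer code `π ↦ (f_π(k))_k` is a bijection from the permutations of `Fin n` onto
`∏ k, Fin (n - k)`. It is injective because `f_π(k)` is the rank of `π k` among the values not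
taken by `π` before `k`, so `π` is recovered from its code from left to right; both sides have
`n!` elements. Prescribing two coordinates of a product of finite sets divides its size by the
sizes of those two factors. -/

open Finset Equiv

theorem card_filter_eval_eq_and_eval_eq_mul {ι : Type*} [Fintype ι] [DecidableEq ι]
    {β : ι → Type*} [∀ k, Fintype (β k)] [∀ k, DecidableEq (β k)] {i j : ι} (hij : i ≠ j)
    (x : β i) (y : β j) :
    #{g : ∀ k, β k | g i = x ∧ g j = y} * Fintype.card (β i) * Fintype.card (β j)
      = Fintype.card (∀ k, β k) := by
  have hfilter : ({g : ∀ k, β k | g i = x ∧ g j = y} : Finset _)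
      = {g ∈ Fintype.piFinset (Function.update (fun k ↦ (univ : Finset (β k))) i {x}) | g j = y} := by
    rw [Fintype.piFinset_update_singleton_eq_filter_piFinset_eq (fun k ↦ (univ : Finset (β k))) i
      (mem_univ x), Fintype.piFinset_univ, filter_filter]
  rw [hfilter,
    Fintype.card_filter_piFinset_eq_of_mem _ _ (by simp [Function.update_of_ne hij.symm])]
  have hi : i ∈ univ.erase j := mem_erase.2 ⟨hij, mem_univ i⟩
  rw [← mul_prod_erase _ _ hi, Fintype.card_pi,
    ← mul_prod_erase univ (fun k ↦ Fintype.card (β k)) (mem_univ j),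
    ← mul_prod_erase _ (fun k ↦ Fintype.card (β k)) hi]
  have hrest : ∀ k ∈ (univ.erase j).erase i,
      #(Function.update (fun k ↦ (univ : Finset (β k))) i {x} k) = Fintype.card (β k) :=
    fun k hk ↦ by rw [Function.update_of_ne (ne_of_mem_erase hk), card_univ]
  rw [prod_congr rfl hrest, Function.update_self, card_singleton]
  ring

theorem Finset.strictMonoOn_card_filter_lt {α : Type*} [LinearOrder α] (s : Finset α) :
    StrictMonoOn (fun x ↦ #{y ∈ s | y < x}) s := by
  intro x hx y _ hxy
  refine card_lt_card ((ssubset_iff_of_subset ?_).2 ⟨x, ?_, ?_⟩)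
  · exact monotone_filter_right s fun z _ hz ↦ hz.trans hxy
  · simpa [hxy] using hx
  · simp

section Lehmer

variable {α : Type*} [Fintype α] [LinearOrder α]

def lehmerDigit (π : Perm α) (k : α) : ℕ := #{l | k < l ∧ π l < π k}

lemma lehmerDigit_eq_card_filter_lt (π : Perm α) (k : α) :
    lehmerDigit π k = #{v ∈ (({l | l < k} : Finset α).image π)ᶜ | v < π k} := by
  refine card_nbij' π π.symm ?_ ?_ (fun _ _ ↦ by simp) (fun _ _ ↦ by simp)
  · intro l
    simp only [coe_filter, Set.mem_ofPred_eq, mem_univ, true_and, mem_compl, mem_image]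
    rintro ⟨hkl, hlt⟩
    refine ⟨?_, hlt⟩
    rintro ⟨x, hx, hxl⟩
    exact (π.injective hxl ▸ hkl).asymm (by simpa using hx)
  · intro v
    simp only [coe_filter, Set.mem_ofPred_eq, mem_univ, true_and, mem_compl, mem_image]
    rintro ⟨hv, hlt⟩
    refine ⟨lt_of_le_of_ne (not_lt.1 fun h ↦ hv ⟨_, by simpa using h, by simp⟩) ?_, by simpa⟩
    rintro rfl
    simp at hlt

lemma lehmerDigit_injective : Function.Injective (lehmerDigit : Perm α → α → ℕ) := by
  intro π σ h
  ext k
  induction k using WellFoundedLT.induction with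
  | _ k ih =>
    have himage : ({l | l < k} : Finset α).image π = ({l | l < k} : Finset α).image σ :=
      image_congr fun l hl ↦ ih l (by simpa using hl)
    have hmem (τ : Perm α) : τ k ∈ (({l | l < k} : Finset α).image τ)ᶜ := by simp
    refine (strictMonoOn_card_filter_lt _).injOn (mem_coe.2 (hmem π))
      (by rw [mem_coe, himage]; exact hmem σ) ?_
    rw [← lehmerDigit_eq_card_filter_lt, himage, ← lehmerDigit_eq_card_filter_lt, h]

end Lehmer

theorem Fin.prod_univ_sub_eq_factorial (n : ℕ) : ∏ k : Fin n, (n - (k : ℕ)) = n.factorial := by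
  rw [Fin.prod_univ_eq_prod_range (fun k ↦ n - k), ← Nat.descFactorial_eq_prod_range,
    Nat.descFactorial_self]

section LehmerCode

variable {n : ℕ}

lemma lehmerDigit_lt_sub (π : Perm (Fin n)) (k : Fin n) : lehmerDigit π k < n - k := by
  have : lehmerDigit π k ≤ #(Ioi k) :=
    card_le_card fun l hl ↦ mem_Ioi.2 (mem_filter.1 hl).2.1
  rw [Fin.card_Ioi] at this
  omega

def lehmerCode (π : Perm (Fin n)) (k : Fin n) : Fin (n - k) :=
  ⟨lehmerDigit π k, lehmerDigit_lt_sub π k⟩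

lemma lehmerCode_bijective : Function.Bijective (lehmerCode (n := n)) := by
  refine (Fintype.bijective_iff_injective_and_card _).2 ⟨fun π σ h ↦ ?_, ?_⟩
  · exact lehmerDigit_injective (funext fun k ↦ congrArg Fin.val (congrFun h k))
  · simp [Fintype.card_perm, Fintype.card_pi, Fin.prod_univ_sub_eq_factorial]

noncomputable def lehmerEquiv (n : ℕ) : Perm (Fin n) ≃ ∀ k : Fin n, Fin (n - k) :=
  .ofBijective _ lehmerCode_bijective

end LehmerCode

/-- Step 5 of Section 3: distinct factoradic digits are independent under the
uniform distribution on permutations: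
card{π | f_π(i) = a ∧ f_π(j) = b} · (n - i) · (n - j) = n!. -/
theorem lehmer_digits_independent (n : ℕ) (i j : Fin n) (hij : i ≠ j)
    (a b : ℕ) (ha : a ≤ n - 1 - (i : ℕ)) (hb : b ≤ n - 1 - (j : ℕ)) :
    (Finset.univ.filter (fun π : Equiv.Perm (Fin n) =>
        (Finset.univ.filter (fun l : Fin n => i < l ∧ π l < π i)).card = a
          ∧ (Finset.univ.filter (fun l : Fin n => j < l ∧ π l < π j)).card = b)).card
      * (n - (i : ℕ)) * (n - (j : ℕ)) = Nat.factorial n := by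
  have hcount := card_filter_eval_eq_and_eval_eq_mul (β := fun k : Fin n ↦ Fin (n - k)) hij
    ⟨a, by omega⟩ ⟨b, by omega⟩
  rw [Fintype.card_fin, Fintype.card_fin, ← Fintype.card_congr (lehmerEquiv n),
    Fintype.card_perm, Fintype.card_fin] at hcount
  rw [← hcount, card_equiv (lehmerEquiv n) fun π ↦ ?_]
  simp [lehmerEquiv, lehmerCode, lehmerDigit, Fin.ext_iff]
end
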